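/- arXiv:math/0408186 — 4 statements merged into one kernel-verified Lean document; each statement's English description precedes it below -/
import Mathlib

section
/- Let k be a nonzero real number, σ ∈ ℝ, and θ ∈ ℝ². The parabolic Green's function G_p(x, ρ) = exp( i·k·‖ρ − θ‖² / (2·(x − σ)) ) / (4π·(x − σ)) satisfies the free parabolic (paraxial) equation 2·i·k·∂G_p/∂x + Δ_ρ G_p = 0 at every point (x, ρ) ∈ ℝ × ℝ² with x ≠ σ. -/
noncomputable section

/-- `ℝ²` (the transverse plane) as Euclidean space. -/
abbrev E2 := EuclideanSpace ℝ (Fin 2)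

/-- Partial derivative in the propagation coordinate `x`. -/
def pdx (f : ℝ × E2 → ℂ) (p : ℝ × E2) : ℂ := fderiv ℝ f p ((1 : ℝ), (0 : E2))

/-- Partial derivative in the `j`-th transverse coordinate direction. -/
def pdr (j : Fin 2) (f : ℝ × E2 → ℂ) (p : ℝ × E2) : ℂ :=
  fderiv ℝ f p ((0 : ℝ), EuclideanSpace.single j 1)

/-- Transverse Laplacian `Δ_ρ f = ∑ j, ∂²f/∂ρ_j²`. -/
def lapR (f : ℝ × E2 → ℂ) (p : ℝ × E2) : ℂ := ∑ j, pdr j (pdr j f) p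

/-- The parabolic Green's function `G_p(x, ρ) = exp(i k ‖ρ − θ‖²/(2(x − σ)))/(4π(x − σ))`. -/
def Gp (k σ : ℝ) (θ : E2) (p : ℝ × E2) : ℂ :=
  Complex.exp (Complex.I * (k : ℂ) * (‖p.2 - θ‖ : ℂ) ^ 2 / (2 * ((p.1 : ℂ) - (σ : ℂ))))
    / (4 * (Real.pi : ℂ) * ((p.1 : ℂ) - (σ : ℂ)))

open Complex ContinuousLinearMap

lemma Gp_eq (k σ : ℝ) (θ : E2) :
    Gp k σ θ = fun p : ℝ × E2 =>
      Complex.exp ((Complex.I * (k : ℂ) * ((‖p.2 - θ‖ ^ 2 : ℝ) : ℂ)) *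
          (2 * ((p.1 : ℂ) - (σ : ℂ)))⁻¹) * (4 * (Real.pi : ℂ) * ((p.1 : ℂ) - (σ : ℂ)))⁻¹ := by
  funext p
  simp [Gp, div_eq_mul_inv, Complex.ofReal_pow, mul_assoc]

/-- Explicit fderiv of `Gp`. -/
def GpD (k σ : ℝ) (θ : E2) (p : ℝ × E2) : ℝ × E2 →L[ℝ] ℂ :=
  (Gp k σ θ p * (-(Complex.I * (k:ℂ) * ((‖p.2 - θ‖ ^ 2 : ℝ) : ℂ)) *
        (2 * ((p.1:ℂ) - σ) ^ 2)⁻¹ - ((p.1:ℂ) - σ)⁻¹)) •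
    (Complex.ofRealCLM.comp (ContinuousLinearMap.fst ℝ ℝ E2)) +
  (Gp k σ θ p * (Complex.I * (k:ℂ) * ((p.1:ℂ) - σ)⁻¹)) •
    (Complex.ofRealCLM.comp ((innerSL ℝ (p.2 - θ)).comp (ContinuousLinearMap.snd ℝ ℝ E2)))

set_option maxHeartbeats 1000000 in
lemma hasFDerivAt_Gp (k σ : ℝ) (θ : E2) (p : ℝ × E2) (hp : p.1 ≠ σ) :
    HasFDerivAt (Gp k σ θ) (GpD k σ θ p) p := by
  have ht : ((p.1:ℂ) - σ) ≠ 0 := sub_ne_zero.2 (by exact_mod_cast hp)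
  have h2t : (2 * ((p.1:ℂ) - σ)) ≠ 0 := by simp [ht]
  have hπ : ((Real.pi : ℂ)) ≠ 0 := by exact_mod_cast Real.pi_ne_zero
  have hD : (4 * (Real.pi:ℂ) * ((p.1:ℂ) - σ)) ≠ 0 := by simp [ht, hπ]
  have hT : HasFDerivAt (fun q : ℝ × E2 => ((q.1 : ℂ) - (σ:ℂ)))
      (Complex.ofRealCLM.comp (ContinuousLinearMap.fst ℝ ℝ E2)) p :=
    (Complex.ofRealCLM.hasFDerivAt.comp p hasFDerivAt_fst).sub_const _
  have hNr : HasFDerivAt (fun q : ℝ × E2 => ‖q.2 - θ‖ ^ 2)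
      (2 • (innerSL ℝ (p.2 - θ)).comp (ContinuousLinearMap.snd ℝ ℝ E2)) p :=
    (hasFDerivAt_snd.sub_const _).norm_sq
  have hQ : HasFDerivAt (fun q : ℝ × E2 => ((‖q.2 - θ‖ ^ 2 : ℝ) : ℂ))
      (Complex.ofRealCLM.comp
        (2 • (innerSL ℝ (p.2 - θ)).comp (ContinuousLinearMap.snd ℝ ℝ E2))) p :=
    Complex.ofRealCLM.hasFDerivAt.comp p hNr
  have hA := hQ.const_mul (Complex.I * (k:ℂ))
  have hinv2T := ((hasDerivAt_inv h2t).comp_hasFDerivAt p (hT.const_mul (2:ℂ)))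
  have hZ := hA.mul hinv2T
  have hE := hZ.cexp
  have hinvD := ((hasDerivAt_inv hD).comp_hasFDerivAt p (hT.const_mul (4 * (Real.pi:ℂ))))
  have hG := hE.mul hinvD
  rw [Gp_eq]
  refine hG.congr_fderiv (Eq.symm ?_)
  apply ContinuousLinearMap.ext
  intro v
  simp only [GpD, Gp_eq, Function.comp, ContinuousLinearMap.add_apply,
    ContinuousLinearMap.smul_apply, ContinuousLinearMap.comp_apply,
    ContinuousLinearMap.coe_fst', ContinuousLinearMap.coe_snd',
    Complex.ofRealCLM_apply, smul_eq_mul, nsmul_eq_mul, Pi.mul_apply]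
  set t : ℂ := (p.1:ℂ) - (σ:ℂ) with hts
  set E : ℂ := Complex.exp (Complex.I * (k:ℂ) * ((‖p.2 - θ‖ ^ 2 : ℝ) : ℂ) * (2*t)⁻¹) with hE2
  clear_value t E
  clear hT hNr hQ hA hinv2T hZ hE hinvD hG
  field_simp
  push_cast
  ring

lemma pdx_Gp (k σ : ℝ) (θ : E2) (p : ℝ × E2) (hp : p.1 ≠ σ) :
    pdx (Gp k σ θ) p = Gp k σ θ p * (-(Complex.I * (k:ℂ) * ((‖p.2 - θ‖ ^ 2 : ℝ) : ℂ)) *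
        (2 * ((p.1:ℂ) - σ) ^ 2)⁻¹ - ((p.1:ℂ) - σ)⁻¹) := by
  rw [pdx, (hasFDerivAt_Gp k σ θ p hp).fderiv]
  simp [GpD]

lemma pdr_Gp (k σ : ℝ) (θ : E2) (j : Fin 2) (p : ℝ × E2) (hp : p.1 ≠ σ) :
    pdr j (Gp k σ θ) p = Gp k σ θ p * (Complex.I * (k:ℂ) * ((p.1:ℂ) - σ)⁻¹) *
      (((p.2 j : ℝ) : ℂ) - ((θ j : ℝ) : ℂ)) := by
  rw [pdr, (hasFDerivAt_Gp k σ θ p hp).fderiv]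
  simp [GpD, real_inner_comm]
  left
  fin_cases j <;> simp [EuclideanSpace.inner_single_right]


set_option maxHeartbeats 1000000 in
lemma pdr2_Gp (k σ : ℝ) (θ : E2) (j : Fin 2) (p : ℝ × E2) (hp : p.1 ≠ σ) :
    pdr j (pdr j (Gp k σ θ)) p =
      Gp k σ θ p * (Complex.I * (k:ℂ) * ((p.1:ℂ) - σ)⁻¹) +
      Gp k σ θ p * (Complex.I * (k:ℂ) * ((p.1:ℂ) - σ)⁻¹) ^ 2 *
        (((p.2 j : ℝ) : ℂ) - ((θ j : ℝ) : ℂ)) ^ 2 := by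
  have ht : ((p.1:ℂ) - σ) ≠ 0 := sub_ne_zero.2 (by exact_mod_cast hp)
  have hT : HasFDerivAt (fun q : ℝ × E2 => ((q.1 : ℂ) - (σ:ℂ)))
      (Complex.ofRealCLM.comp (ContinuousLinearMap.fst ℝ ℝ E2)) p :=
    (Complex.ofRealCLM.hasFDerivAt.comp p hasFDerivAt_fst).sub_const _
  have hMid := ((hasDerivAt_inv ht).comp_hasFDerivAt p hT).const_mul (Complex.I * (k:ℂ))
  have hcj : HasFDerivAt (fun q : ℝ × E2 => ((q.2 j : ℝ) : ℂ) - ((θ j : ℝ) : ℂ))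
      (Complex.ofRealCLM.comp
        ((EuclideanSpace.proj j).comp (ContinuousLinearMap.snd ℝ ℝ E2))) p :=
    ((Complex.ofRealCLM.comp
      ((EuclideanSpace.proj j).comp (ContinuousLinearMap.snd ℝ ℝ E2))).hasFDerivAt).sub_const _
  have hF := ((hasFDerivAt_Gp k σ θ p hp).mul hMid).mul hcj
  have hev : pdr j (Gp k σ θ) =ᶠ[nhds p]
      (fun q => Gp k σ θ q * (Complex.I * (k:ℂ) * ((q.1:ℂ) - σ)⁻¹) *
        (((q.2 j : ℝ) : ℂ) - ((θ j : ℝ) : ℂ))) := by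
    filter_upwards [(isOpen_ne.preimage continuous_fst).mem_nhds hp] with q hq
    exact pdr_Gp k σ θ j q hq
  have hF' : HasFDerivAt
      (fun q : ℝ × E2 => Gp k σ θ q * (Complex.I * (k:ℂ) * ((q.1:ℂ) - σ)⁻¹) *
        (((q.2 j : ℝ) : ℂ) - ((θ j : ℝ) : ℂ)))
      ((Gp k σ θ p * (Complex.I * (k:ℂ) * ((p.1:ℂ) - (σ:ℂ))⁻¹)) •
          Complex.ofRealCLM.comp ((EuclideanSpace.proj j).comp (ContinuousLinearMap.snd ℝ ℝ E2)) +
        ((((p.2 j : ℝ):ℂ)) - ((θ j : ℝ):ℂ)) •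
          (Gp k σ θ p • (Complex.I * (k:ℂ)) • -(((p.1:ℂ) - (σ:ℂ)) ^ 2)⁻¹ •
              Complex.ofRealCLM.comp (ContinuousLinearMap.fst ℝ ℝ E2) +
            (Complex.I * (k:ℂ) * ((p.1:ℂ) - (σ:ℂ))⁻¹) • GpD k σ θ p)) p := hF
  rw [pdr, hev.fderiv_eq, hF'.fderiv]
  simp only [Function.comp, ContinuousLinearMap.add_apply, ContinuousLinearMap.smul_apply,
    ContinuousLinearMap.comp_apply, ContinuousLinearMap.coe_fst', ContinuousLinearMap.coe_snd',
    Complex.ofRealCLM_apply, smul_eq_mul, nsmul_eq_mul, GpD]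
  simp [real_inner_comm]
  fin_cases j <;> simp [EuclideanSpace.inner_single_right] <;> ring

/-- the parabolic Green's function satisfies the free paraxial
equation `2 i k ∂G_p/∂x + Δ_ρ G_p = 0` away from the source plane `x = σ`. -/
theorem parabolic_greens_function_equation (k : ℝ) (hk : k ≠ 0) (σ : ℝ) (θ : E2) :
    ∀ p : ℝ × E2, p.1 ≠ σ →
      2 * Complex.I * (k : ℂ) * pdx (Gp k σ θ) p + lapR (Gp k σ θ) p = 0 := by
  intro p hp
  have ht : ((p.1:ℂ) - σ) ≠ 0 := sub_ne_zero.2 (by exact_mod_cast hp)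
  have hns : ‖p.2 - θ‖ ^ 2 = ((p.2 - θ) 0) ^ 2 + ((p.2 - θ) 1) ^ 2 := by
    rw [EuclideanSpace.norm_eq, Real.sq_sqrt (by positivity)]
    simp [Fin.sum_univ_two, sq_abs]
  have hqc : ((‖p.2 - θ‖ ^ 2 : ℝ) : ℂ) =
      (((p.2 0 : ℝ) : ℂ) - ((θ 0 : ℝ) : ℂ)) ^ 2 + (((p.2 1 : ℝ) : ℂ) - ((θ 1 : ℝ) : ℂ)) ^ 2 := by
    rw [hns]
    push_cast [PiLp.sub_apply]
    ring
  rw [lapR, Fin.sum_univ_two, pdr2_Gp k σ θ 0 p hp, pdr2_Gp k σ θ 1 p hp, pdx_Gp k σ θ p hp, hqc]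
  field_simp
  ring
end
end

section
/- Let k be real, let n₁ : ℝ × ℝ² → ℝ, and let Φ₀, Φ₁ : ℝ × ℝ² → ℂ be twice continuously differentiable. Set v₀ = exp ∘ Φ₀ and W₁ = Φ₁·v₀. If 2·i·k·∂v₀/∂x + Δ_ρ v₀ = 0 everywhere and 2·i·k·∂Φ₁/∂x + Δ_ρ Φ₁ + 2·∑_{j=1}^{2} (∂Φ₀/∂ρ_j)·(∂Φ₁/∂ρ_j) = −2·k²·n₁ everywhere, then W₁ satisfies 2·i·k·∂W₁/∂x + Δ_ρ W₁ = −2·k²·n₁·v₀ at every point of ℝ × ℝ². -/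
noncomputable section

lemma pd_mul (v : ℝ × E2) {f g : ℝ × E2 → ℂ} {p : ℝ × E2}
    (hf : DifferentiableAt ℝ f p) (hg : DifferentiableAt ℝ g p) :
    fderiv ℝ (fun q => f q * g q) p v
      = fderiv ℝ f p v * g p + f p * fderiv ℝ g p v := by
  rw [fderiv_fun_mul hf hg]
  simp only [ContinuousLinearMap.add_apply, ContinuousLinearMap.smul_apply, smul_eq_mul]
  ring

lemma pd_exp (v : ℝ × E2) {f : ℝ × E2 → ℂ} {p : ℝ × E2}
    (hf : DifferentiableAt ℝ f p) :
    fderiv ℝ (fun q => Complex.exp (f q)) p v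
      = Complex.exp (f p) * fderiv ℝ f p v := by
  rw [(hf.hasFDerivAt.cexp).fderiv]
  simp

lemma pdr_contDiff {f : ℝ × E2 → ℂ} (hf : ContDiff ℝ 2 f) (j : Fin 2) :
    ContDiff ℝ 1 (pdr j f) :=
  (hf.fderiv_right (by norm_num)).clm_apply contDiff_const

theorem key (k : ℝ) (n₁ : ℝ × E2 → ℝ) (Φ₀ Φ₁ v₀ : ℝ × E2 → ℂ)
    (hv : ContDiff ℝ 2 v₀) (h₁ : ContDiff ℝ 2 Φ₁)
    (hder : ∀ j p, pdr j v₀ p = v₀ p * pdr j Φ₀ p)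
    (hv₀ : ∀ p, 2 * Complex.I * (k : ℂ) * pdx v₀ p + lapR v₀ p = 0)
    (hΦ₁ : ∀ p : ℝ × E2,
      2 * Complex.I * (k : ℂ) * pdx Φ₁ p + lapR Φ₁ p
          + 2 * ∑ j, pdr j Φ₀ p * pdr j Φ₁ p
        = -2 * (k : ℂ) ^ 2 * (n₁ p : ℂ)) :
    ∀ p : ℝ × E2,
      2 * Complex.I * (k : ℂ) * pdx (fun q => Φ₁ q * v₀ q) p
          + lapR (fun q => Φ₁ q * v₀ q) p
        = -2 * (k : ℂ) ^ 2 * (n₁ p : ℂ) * v₀ p := by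
  intro p
  have hvd : Differentiable ℝ v₀ := hv.differentiable two_ne_zero
  have h1d : Differentiable ℝ Φ₁ := h₁.differentiable two_ne_zero
  have hpv : ∀ j, ContDiff ℝ 1 (pdr j v₀) := fun j => pdr_contDiff hv j
  have hp1 : ∀ j, ContDiff ℝ 1 (pdr j Φ₁) := fun j => pdr_contDiff h₁ j
  have e1 : pdx (fun q => Φ₁ q * v₀ q) p
      = pdx Φ₁ p * v₀ p + Φ₁ p * pdx v₀ p := pd_mul _ (h1d p) (hvd p)
  have e2 : ∀ j, pdr j (fun q => Φ₁ q * v₀ q)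
      = fun q => pdr j Φ₁ q * v₀ q + Φ₁ q * pdr j v₀ q := by
    intro j
    funext q
    exact pd_mul _ (h1d q) (hvd q)
  have e3 : ∀ j, pdr j (pdr j (fun q => Φ₁ q * v₀ q)) p
      = pdr j (pdr j Φ₁) p * v₀ p + 2 * (pdr j Φ₁ p * pdr j v₀ p)
        + Φ₁ p * pdr j (pdr j v₀) p := by
    intro j
    rw [e2 j]
    have d1 : DifferentiableAt ℝ (fun q => pdr j Φ₁ q * v₀ q) p :=
      (((hp1 j).differentiable one_ne_zero) p).mul (hvd p)
    have d2 : DifferentiableAt ℝ (fun q => Φ₁ q * pdr j v₀ q) p :=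
      (h1d p).mul (((hpv j).differentiable one_ne_zero) p)
    show fderiv ℝ (fun q => pdr j Φ₁ q * v₀ q + Φ₁ q * pdr j v₀ q) p _ = _
    rw [fderiv_fun_add d1 d2]
    simp only [ContinuousLinearMap.add_apply]
    rw [pd_mul _ (((hp1 j).differentiable one_ne_zero) p) (hvd p),
        pd_mul _ (h1d p) (((hpv j).differentiable one_ne_zero) p)]
    simp only [pdr]
    ring
  have hv0p := hv₀ p
  have hP1p := hΦ₁ p
  simp only [lapR, Fin.sum_univ_two] at hv0p hP1p ⊢
  rw [e1, e3 0, e3 1, hder 0 p, hder 1 p]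
  linear_combination v₀ p * hP1p + Φ₁ p * hv0p

/-- if `v₀ = exp ∘ Φ₀` solves the free parabolic equation and `Φ₁`
solves the first-order Rytov equation, then `W₁ = Φ₁ v₀` satisfies
`2 i k ∂W₁/∂x + Δ_ρ W₁ = −2 k² n₁ v₀` everywhere. -/
theorem rytov_first_order_parabolic (k : ℝ) (n₁ : ℝ × E2 → ℝ) (Φ₀ Φ₁ : ℝ × E2 → ℂ)
    (h₀ : ContDiff ℝ 2 Φ₀) (h₁ : ContDiff ℝ 2 Φ₁)
    (hv₀ : ∀ p : ℝ × E2,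
      2 * Complex.I * (k : ℂ) * pdx (fun q => Complex.exp (Φ₀ q)) p
        + lapR (fun q => Complex.exp (Φ₀ q)) p = 0)
    (hΦ₁ : ∀ p : ℝ × E2,
      2 * Complex.I * (k : ℂ) * pdx Φ₁ p + lapR Φ₁ p
          + 2 * ∑ j, pdr j Φ₀ p * pdr j Φ₁ p
        = -2 * (k : ℂ) ^ 2 * (n₁ p : ℂ)) :
    ∀ p : ℝ × E2,
      2 * Complex.I * (k : ℂ) * pdx (fun q => Φ₁ q * Complex.exp (Φ₀ q)) p
          + lapR (fun q => Φ₁ q * Complex.exp (Φ₀ q)) p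
        = -2 * (k : ℂ) ^ 2 * (n₁ p : ℂ) * Complex.exp (Φ₀ p) := by
  exact key k n₁ Φ₀ Φ₁ (fun q => Complex.exp (Φ₀ q)) h₀.cexp h₁
    (fun j p => pd_exp _ ((h₀.differentiable two_ne_zero) p)) hv₀ hΦ₁
end
end

section
/- Let a > 0 and let B be the closed ball of radius a centered at 0 in ℝ². Let K : ℝ² → ℝ² → ℂ be a kernel satisfying K(x, y) = K(y, x) and conj(K(x, y)) = K(x, −y) for all x, y ∈ B. Let Ψ : ℝ² → ℂ be measurable with 0 < ∫_B |Ψ|² < ∞, suppose the function (x, y) ↦ K(x, y)·Ψ(y)·conj(Ψ(x)) is integrable on B × B, and let α ∈ ℂ satisfy α·Ψ(x) = ∫_B K(x, y)·Ψ(y) dy for almost every x ∈ B. If Ψ is even, i.e. Ψ(−x) = Ψ(x) for all x, then α is real. -/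
open MeasureTheory

noncomputable section

/-- an eigenvalue of the apodization integral equation associated
with an even eigenfunction is real. -/
theorem apodization_even_eigenvalue_real (a : ℝ) (ha : 0 < a) (K : E2 → E2 → ℂ)
    (hsymm : ∀ x ∈ Metric.closedBall (0 : E2) a, ∀ y ∈ Metric.closedBall (0 : E2) a,
      K x y = K y x)
    (hconj : ∀ x ∈ Metric.closedBall (0 : E2) a, ∀ y ∈ Metric.closedBall (0 : E2) a,
      (starRingEnd ℂ) (K x y) = K x (-y))
    (Ψ : E2 → ℂ) (hmeas : Measurable Ψ)
    (hL2 : IntegrableOn (fun x => ‖Ψ x‖ ^ 2) (Metric.closedBall (0 : E2) a))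
    (hpos : 0 < ∫ x in Metric.closedBall (0 : E2) a, ‖Ψ x‖ ^ 2)
    (hker : IntegrableOn
      (fun p : E2 × E2 => K p.1 p.2 * Ψ p.2 * (starRingEnd ℂ) (Ψ p.1))
      ((Metric.closedBall (0 : E2) a) ×ˢ (Metric.closedBall (0 : E2) a)))
    (α : ℂ)
    (heig : ∀ᵐ x ∂(volume.restrict (Metric.closedBall (0 : E2) a)),
      α * Ψ x = ∫ y in Metric.closedBall (0 : E2) a, K x y * Ψ y)
    (heven : ∀ x : E2, Ψ (-x) = Ψ x) :
    α.im = 0 := by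
  set B := Metric.closedBall (0 : E2) a with hBdef
  set μ := volume.restrict B with hμ
  set f : E2 × E2 → ℂ := fun p => K p.1 p.2 * Ψ p.2 * (starRingEnd ℂ) (Ψ p.1) with hf
  have hBmeas : MeasurableSet B := measurableSet_closedBall
  have hprodmeas : MeasurableSet (B ×ˢ B) := hBmeas.prod hBmeas
  have hfint : Integrable f (μ.prod μ) := by
    rw [hμ, Measure.prod_restrict]
    exact hker
  set S : ℝ := ∫ x in B, ‖Ψ x‖ ^ 2 with hS
  set I : ℂ := ∫ p, f p ∂(μ.prod μ) with hI
  have hae : ∀ᵐ p ∂(μ.prod μ), p ∈ B ×ˢ B := by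
    rw [hμ, Measure.prod_restrict]
    exact ae_restrict_mem hprodmeas
  -- Step 1: α * S = I
  have step1 : α * (S : ℂ) = I := by
    have h2 : ∫ x, α * Ψ x * (starRingEnd ℂ) (Ψ x) ∂μ
        = ∫ x, (∫ y in B, K x y * Ψ y) * (starRingEnd ℂ) (Ψ x) ∂μ := by
      refine integral_congr_ae ?_
      filter_upwards [heig] with x hx
      rw [hx]
    have hL : ∫ x, α * Ψ x * (starRingEnd ℂ) (Ψ x) ∂μ = α * (S : ℂ) := by
      have hpt : ∀ x, α * Ψ x * (starRingEnd ℂ) (Ψ x) = α * ((‖Ψ x‖ ^ 2 : ℝ) : ℂ) := by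
        intro x
        rw [mul_assoc, Complex.mul_conj]
        norm_cast
        rw [Complex.normSq_eq_norm_sq]
      simp_rw [hpt]
      rw [integral_const_mul]
      congr 1
      exact integral_ofReal
    have hR : ∫ x, (∫ y in B, K x y * Ψ y) * (starRingEnd ℂ) (Ψ x) ∂μ = I := by
      have hfub := MeasureTheory.integral_integral
        (f := fun x y => f (x, y)) (μ := μ) (ν := μ) hfint
      rw [hI, ← hfub]
      refine integral_congr_ae (Filter.Eventually.of_forall fun x => ?_)
      show (∫ y in B, K x y * Ψ y) * (starRingEnd ℂ) (Ψ x) = ∫ y, f (x, y) ∂μ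
      rw [← integral_mul_const]
    rw [← hL, h2, hR]
  -- Step 2: conj I = I
  have step2 : (starRingEnd ℂ) I = I := by
    have hnegMP : MeasurePreserving (fun x : E2 => -x) μ μ := by
      refine ⟨measurable_neg, ?_⟩
      have hpre : ((fun x : E2 => -x) ⁻¹' B) = B := by
        ext x
        simp [hBdef, Metric.mem_closedBall, dist_zero_right]
      calc Measure.map (fun x : E2 => -x) μ
          = Measure.map (fun x : E2 => -x) (volume.restrict ((fun x : E2 => -x) ⁻¹' B)) := by
            rw [hpre, hμ]
        _ = (Measure.map (fun x : E2 => -x) volume).restrict B :=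
            (Measure.restrict_map measurable_neg hBmeas).symm
        _ = μ := by
            rw [hμ, (Measure.measurePreserving_neg (volume : Measure E2)).map_eq]
    have h0 : (starRingEnd ℂ) I = ∫ p, (starRingEnd ℂ) (f p) ∂(μ.prod μ) :=
      integral_conj.symm
    have h1 : ∫ p, (starRingEnd ℂ) (f p) ∂(μ.prod μ)
        = ∫ p : E2 × E2, K p.1 (-p.2) * (starRingEnd ℂ) (Ψ p.2) * Ψ p.1 ∂(μ.prod μ) := by
      refine integral_congr_ae ?_
      filter_upwards [hae] with p hp
      simp only [hf, map_mul]
      rw [hconj _ hp.1 _ hp.2, Complex.conj_conj]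
    have h2 : ∫ p : E2 × E2, K p.1 (-p.2) * (starRingEnd ℂ) (Ψ p.2) * Ψ p.1 ∂(μ.prod μ)
        = ∫ p : E2 × E2, K p.1 p.2 * (starRingEnd ℂ) (Ψ p.2) * Ψ p.1 ∂(μ.prod μ) := by
      have hT : MeasurePreserving (fun p : E2 × E2 => (p.1, -p.2)) (μ.prod μ) (μ.prod μ) :=
        (MeasurePreserving.id μ).prod hnegMP
      have hemb : MeasurableEmbedding (fun p : E2 × E2 => (p.1, -p.2)) :=
        (MeasurableEquiv.prodCongr (MeasurableEquiv.refl E2)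
          (MeasurableEquiv.neg E2)).measurableEmbedding
      have hcomp := hT.integral_comp hemb
        (fun p : E2 × E2 => K p.1 (-p.2) * (starRingEnd ℂ) (Ψ p.2) * Ψ p.1)
      rw [← hcomp]
      refine integral_congr_ae (Filter.Eventually.of_forall fun p => ?_)
      simp [heven]
    have h3 : ∫ p : E2 × E2, K p.1 p.2 * (starRingEnd ℂ) (Ψ p.2) * Ψ p.1 ∂(μ.prod μ) = I := by
      have h3a : ∫ p : E2 × E2, K p.1 p.2 * (starRingEnd ℂ) (Ψ p.2) * Ψ p.1 ∂(μ.prod μ)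
          = ∫ p : E2 × E2, K p.2 p.1 * (starRingEnd ℂ) (Ψ p.2) * Ψ p.1 ∂(μ.prod μ) := by
        refine integral_congr_ae ?_
        filter_upwards [hae] with p hp
        rw [hsymm _ hp.1 _ hp.2]
      have hswap := integral_prod_swap (μ := μ) (ν := μ)
        (fun p : E2 × E2 => K p.2 p.1 * (starRingEnd ℂ) (Ψ p.2) * Ψ p.1)
      rw [h3a, ← hswap, hI]
      refine integral_congr_ae (Filter.Eventually.of_forall fun p => ?_)
      simp [hf, Prod.swap]
      ring
    rw [h0, h1, h2, h3]
  -- conclude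
  have hSne : (S : ℂ) ≠ 0 := by
    exact_mod_cast ne_of_gt hpos
  have hconjα : (starRingEnd ℂ) α = α := by
    have : (starRingEnd ℂ) α * (S : ℂ) = α * (S : ℂ) := by
      have := congrArg (starRingEnd ℂ) step1
      rw [map_mul, Complex.conj_ofReal, step2] at this
      rw [this, step1]
    exact mul_right_cancel₀ hSne this
  exact Complex.conj_eq_iff_im.mp hconjα
end
end

section
/- Let a > 0 and let B be the closed ball of radius a centered at 0 in ℝ². Let K : ℝ² → ℝ² → ℂ be a kernel satisfying K(x, y) = K(y, x) and conj(K(x, y)) = K(x, −y) for all x, y ∈ B. Let Ψ : ℝ² → ℂ be measurable with 0 < ∫_B |Ψ|² < ∞, suppose the function (x, y) ↦ K(x, y)·Ψ(y)·conj(Ψ(x)) is integrable on B × B, and let α ∈ ℂ satisfy α·Ψ(x) = ∫_B K(x, y)·Ψ(y) dy for almost every x ∈ B. If Ψ is odd, i.e. Ψ(−x) = −Ψ(x) for all x, then α is purely imaginary. -/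
/-!
Pair the eigenvalue equation with `conj Ψ` and integrate over the pupil: the quadratic form
`Q = ∬ K(x, y) Ψ(y) conj Ψ(x)` equals `α ‖Ψ‖²`. Conjugating `Q` and using
`conj K(x, y) = K(x, -y)`, the substitution `y ↦ -y`, the oddness of `Ψ`, the exchange of `x`
and `y` and the symmetry of `K` gives `conj Q = -Q`, so `Q`, hence `α`, is purely imaginary.
-/

open MeasureTheory

noncomputable section

open ComplexConjugate

section QuadForm

variable {X : Type*} [MeasurableSpace X]

def kernelQuadForm (μ : Measure X) (K : X → X → ℂ) (Ψ : X → ℂ) : ℂ :=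
  ∫ p, K p.1 p.2 * Ψ p.2 * conj (Ψ p.1) ∂μ.prod μ

variable {μ : Measure X} [SFinite μ]

theorem kernelQuadForm_eq_eigenvalue_mul {K : X → X → ℂ} {Ψ : X → ℂ} {α : ℂ}
    (hint : Integrable (fun p : X × X => K p.1 p.2 * Ψ p.2 * conj (Ψ p.1)) (μ.prod μ))
    (heig : ∀ᵐ x ∂μ, α * Ψ x = ∫ y, K x y * Ψ y ∂μ) :
    kernelQuadForm μ K Ψ = α * ∫ x, ‖Ψ x‖ ^ 2 ∂μ := by
  rw [kernelQuadForm, integral_prod _ hint, ← integral_complex_ofReal, ← integral_const_mul]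
  refine integral_congr_ae ?_
  filter_upwards [heig] with x hx
  rw [integral_mul_const, ← hx, mul_assoc, Complex.mul_conj']
  push_cast
  rfl

theorem conj_kernelQuadForm_of_odd [InvolutiveNeg X] [MeasurableNeg X]
    (hneg : MeasurePreserving Neg.neg μ μ) {K : X → X → ℂ} {Ψ : X → ℂ}
    (hsymm : ∀ᵐ p ∂μ.prod μ, K p.1 p.2 = K p.2 p.1)
    (hconj : ∀ᵐ p ∂μ.prod μ, conj (K p.1 p.2) = K p.1 (-p.2)) (hodd : Function.Odd Ψ) :
    conj (kernelQuadForm μ K Ψ) = -kernelQuadForm μ K Ψ := by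
  let negSnd : X × X ≃ᵐ X × X := (MeasurableEquiv.refl X).prodCongr (MeasurableEquiv.neg X)
  have hnegSnd : MeasurePreserving negSnd (μ.prod μ) (μ.prod μ) :=
    (MeasurePreserving.id μ).prod hneg
  have hnegSnd_apply (p : X × X) : negSnd p = (p.1, -p.2) := rfl
  calc conj (kernelQuadForm μ K Ψ)
      = ∫ p, K p.1 (-p.2) * conj (Ψ p.2) * Ψ p.1 ∂μ.prod μ := by
        rw [kernelQuadForm, ← integral_conj]
        refine integral_congr_ae ?_
        filter_upwards [hconj] with p hp
        simp [hp]
    _ = -∫ p, K p.1 p.2 * conj (Ψ p.2) * Ψ p.1 ∂μ.prod μ := by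
        rw [← integral_neg, ← hnegSnd.integral_comp']
        congr 1 with p
        simp [hnegSnd_apply, hodd p.2]
    _ = -∫ p, K p.2 p.1 * Ψ p.1 * conj (Ψ p.2) ∂μ.prod μ := by
        congr 1
        refine integral_congr_ae ?_
        filter_upwards [hsymm] with p hp
        rw [hp]
        ring
    _ = -kernelQuadForm μ K Ψ := by
        rw [kernelQuadForm, ← integral_prod_swap]
        rfl

end QuadForm

theorem measurePreserving_neg_restrict {G : Type*} [MeasurableSpace G] [InvolutiveNeg G]
    [MeasurableNeg G] (μ : Measure G) [μ.IsNegInvariant] {s : Set G} (hs : MeasurableSet s)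
    (hneg : -s = s) : MeasurePreserving Neg.neg (μ.restrict s) (μ.restrict s) := by
  have h := (Measure.measurePreserving_neg μ).restrict_preimage hs
  rwa [Set.neg_preimage, hneg] at h

theorem apodization_odd_eigenvalue_imaginary_general (a : ℝ) (K : E2 → E2 → ℂ)
    (hsymm : ∀ x ∈ Metric.closedBall (0 : E2) a, ∀ y ∈ Metric.closedBall (0 : E2) a,
      K x y = K y x)
    (hconj : ∀ x ∈ Metric.closedBall (0 : E2) a, ∀ y ∈ Metric.closedBall (0 : E2) a,
      (starRingEnd ℂ) (K x y) = K x (-y))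
    (Ψ : E2 → ℂ)
    (hpos : 0 < ∫ x in Metric.closedBall (0 : E2) a, ‖Ψ x‖ ^ 2)
    (hker : IntegrableOn
      (fun p : E2 × E2 => K p.1 p.2 * Ψ p.2 * (starRingEnd ℂ) (Ψ p.1))
      ((Metric.closedBall (0 : E2) a) ×ˢ (Metric.closedBall (0 : E2) a)))
    (α : ℂ)
    (heig : ∀ᵐ x ∂(volume.restrict (Metric.closedBall (0 : E2) a)),
      α * Ψ x = ∫ y in Metric.closedBall (0 : E2) a, K x y * Ψ y)
    (hodd : ∀ x : E2, Ψ (-x) = -Ψ x) :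
    α.re = 0 := by
  set B := Metric.closedBall (0 : E2) a
  have hB : MeasurableSet B := measurableSet_closedBall
  have hprod : (volume.restrict B).prod (volume.restrict B) = volume.restrict (B ×ˢ B) := by
    rw [Measure.prod_restrict, ← Measure.volume_eq_prod]
  have hneg : MeasurePreserving Neg.neg (volume.restrict B) (volume.restrict B) :=
    measurePreserving_neg_restrict volume hB (by rw [neg_closedBall, neg_zero])
  have hQ := conj_kernelQuadForm_of_odd hneg
    (by rw [hprod]; exact ae_restrict_of_forall_mem (hB.prod hB) fun p hp => hsymm _ hp.1 _ hp.2)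
    (by rw [hprod]; exact ae_restrict_of_forall_mem (hB.prod hB) fun p hp => hconj _ hp.1 _ hp.2)
    hodd
  rw [kernelQuadForm_eq_eigenvalue_mul (by rwa [hprod]) heig] at hQ
  have hre : α.re * (∫ x in B, ‖Ψ x‖ ^ 2) = 0 := by
    have := congrArg Complex.re hQ
    simp only [Complex.conj_re, Complex.neg_re, Complex.re_mul_ofReal] at this
    linarith
  exact (mul_eq_zero.mp hre).resolve_right hpos.ne'

/-- an eigenvalue of the apodization integral equation associated
with an odd eigenfunction is purely imaginary. -/
theorem apodization_odd_eigenvalue_imaginary (a : ℝ) (ha : 0 < a) (K : E2 → E2 → ℂ)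
    (hsymm : ∀ x ∈ Metric.closedBall (0 : E2) a, ∀ y ∈ Metric.closedBall (0 : E2) a,
      K x y = K y x)
    (hconj : ∀ x ∈ Metric.closedBall (0 : E2) a, ∀ y ∈ Metric.closedBall (0 : E2) a,
      (starRingEnd ℂ) (K x y) = K x (-y))
    (Ψ : E2 → ℂ) (hmeas : Measurable Ψ)
    (hL2 : IntegrableOn (fun x => ‖Ψ x‖ ^ 2) (Metric.closedBall (0 : E2) a))
    (hpos : 0 < ∫ x in Metric.closedBall (0 : E2) a, ‖Ψ x‖ ^ 2)
    (hker : IntegrableOn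
      (fun p : E2 × E2 => K p.1 p.2 * Ψ p.2 * (starRingEnd ℂ) (Ψ p.1))
      ((Metric.closedBall (0 : E2) a) ×ˢ (Metric.closedBall (0 : E2) a)))
    (α : ℂ)
    (heig : ∀ᵐ x ∂(volume.restrict (Metric.closedBall (0 : E2) a)),
      α * Ψ x = ∫ y in Metric.closedBall (0 : E2) a, K x y * Ψ y)
    (hodd : ∀ x : E2, Ψ (-x) = -Ψ x) :
    α.re = 0 :=
  apodization_odd_eigenvalue_imaginary_general a K hsymm hconj Ψ hpos hker α heig hodd

end
end
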